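/- Let (c_l)_{l ∈ ℕ} be real numbers with Σ_{l=0}^{∞} |c_l| √(l!) < ∞. Then the series of functions x ↦ Σ_{l=0}^{∞} c_l H_l(x) e^{−x²/2} converges uniformly on ℝ, and its sum is a bounded continuous function on ℝ. In particular, for every x ∈ ℝ the series Σ_{l=0}^{∞} c_l H_l(x) converges and defines a continuous function of x. -/

import Mathlib

open Filter

/-- The `l`-th probabilists' Hermite polynomial, as a function on `ℝ`. -/
noncomputable def Hm (l : ℕ) (x : ℝ) : ℝ := Polynomial.aeval x (Polynomial.hermite l)

open Polynomial MeasureTheory Real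

noncomputable def Rp (l : ℕ) : ℝ[X] := (hermite l).map (Int.castRingHom ℝ)

theorem Hm_eq_eval (l : ℕ) (x : ℝ) : Hm l x = (Rp l).eval x := by
  rw [Hm, Rp, eval_map, aeval_def]
  rfl

theorem Hm_continuous (l : ℕ) : Continuous (Hm l) :=
  Polynomial.continuous_aeval _

theorem derivative_hermite_succ (n : ℕ) :
    derivative (hermite (n + 1)) = ((n : ℤ[X]) + 1) * hermite n := by
  induction n with
  | zero => simp [hermite_one]
  | succ n ih =>
    have hd : derivative ((n : ℤ[X]) + 1) = 0 := by simp
    rw [hermite_succ (n+1), derivative_sub, derivative_mul, derivative_X, one_mul, ih,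
      derivative_mul, hd, zero_mul, zero_add, hermite_succ n]
    push_cast
    ring

theorem hasDerivAt_Hm (l : ℕ) (x : ℝ) :
    HasDerivAt (Hm l) (x * Hm l x - Hm (l + 1) x) x := by
  have h := (hermite l).hasDerivAt_aeval (𝕜 := ℝ) x
  refine h.congr_deriv ?_
  have : Hm (l+1) x = x * Hm l x - aeval x (derivative (hermite l)) := by
    simp [Hm, hermite_succ]
  rw [this]; ring

theorem hasDerivAt_Hm_succ (l : ℕ) (x : ℝ) :
    HasDerivAt (Hm (l + 1)) (((l : ℝ) + 1) * Hm l x) x := by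
  have h := (hermite (l+1)).hasDerivAt_aeval (𝕜 := ℝ) x
  refine h.congr_deriv ?_
  rw [derivative_hermite_succ]
  simp [Hm]

theorem tendsto_pow_gauss_top (n : ℕ) {b : ℝ} (hb : 0 < b) :
    Tendsto (fun x : ℝ => x ^ n * Real.exp (-(b * x ^ 2))) atTop (nhds 0) := by
  rw [tendsto_zero_iff_abs_tendsto_zero]
  apply squeeze_zero' (Eventually.of_forall fun x => abs_nonneg _)
    (g := fun x => x ^ n * Real.exp (-x))
  · filter_upwards [eventually_ge_atTop (max 1 b⁻¹)] with x hx
    have hx1 : (1:ℝ) ≤ x := le_trans (le_max_left _ _) hx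
    have hxb : b⁻¹ ≤ x := le_trans (le_max_right _ _) hx
    have hxpos : 0 < x := lt_of_lt_of_le one_pos hx1
    rw [abs_mul, abs_pow, abs_of_pos hxpos, abs_of_pos (Real.exp_pos _)]
    apply mul_le_mul_of_nonneg_left _ (pow_nonneg hxpos.le n)
    apply Real.exp_le_exp.mpr
    have : x ≤ b * x ^ 2 := by
      have := (inv_le_iff_one_le_mul₀ hb).mp hxb
      nlinarith
    linarith
  · exact Real.tendsto_pow_mul_exp_neg_atTop_nhds_zero n

theorem tendsto_poly_gauss_top (P : ℝ[X]) {b : ℝ} (hb : 0 < b) :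
    Tendsto (fun x : ℝ => P.eval x * Real.exp (-(b * x ^ 2))) atTop (nhds 0) := by
  have : (fun x : ℝ => P.eval x * Real.exp (-(b * x ^ 2))) =
      fun x => ∑ i ∈ Finset.range (P.natDegree + 1),
        P.coeff i * (x ^ i * Real.exp (-(b * x ^ 2))) := by
    funext x
    rw [Polynomial.eval_eq_sum_range, Finset.sum_mul]
    simp [mul_assoc]
  rw [this]
  have := fun i (_ : i ∈ Finset.range (P.natDegree + 1)) =>
    ((tendsto_pow_gauss_top i hb).const_mul (P.coeff i))
  simpa using tendsto_finset_sum _ this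

theorem tendsto_poly_gauss_bot (P : ℝ[X]) {b : ℝ} (hb : 0 < b) :
    Tendsto (fun x : ℝ => P.eval x * Real.exp (-(b * x ^ 2))) atBot (nhds 0) := by
  have h := (tendsto_poly_gauss_top (P.comp (-X)) hb).comp tendsto_neg_atBot_atTop
  convert h using 2 with x
  simp [Function.comp, eval_comp]

theorem bounded_of_tendsto {f : ℝ → ℝ} (hc : Continuous f)
    (h1 : Tendsto f atTop (nhds 0)) (h2 : Tendsto f atBot (nhds 0)) :
    ∃ C, ∀ x, |f x| ≤ C := by
  have hco : Tendsto f (Filter.cocompact ℝ) (nhds 0) := by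
    rw [cocompact_eq_atBot_atTop]
    exact Tendsto.sup h2 h1
  have h1' : ∀ᶠ x in Filter.cocompact ℝ, |f x| ≤ 1 := by
    filter_upwards [hco.eventually (Metric.ball_mem_nhds 0 one_pos)] with x hx
    simpa [Real.dist_eq] using le_of_lt hx
  obtain ⟨K, hK, hKf⟩ := mem_cocompact.mp h1'
  obtain ⟨C, hC⟩ := hK.exists_bound_of_continuousOn hc.continuousOn
  refine ⟨max C 1, fun x => ?_⟩
  by_cases hx : x ∈ K
  · exact le_trans (by simpa using hC x hx) (le_max_left _ _)
  · exact le_trans (hKf hx) (le_max_right _ _)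

theorem continuous_poly_gauss (P : ℝ[X]) (b : ℝ) :
    Continuous (fun x : ℝ => P.eval x * Real.exp (-(b * x ^ 2))) := by
  exact P.continuous.mul (Real.continuous_exp.comp (by continuity))

theorem integrable_poly_gauss (P : ℝ[X]) : Integrable (fun x : ℝ => P.eval x * Real.exp (-x ^ 2)) := by
  have h2 : (0:ℝ) < 1/2 := by norm_num
  obtain ⟨C, hC⟩ := bounded_of_tendsto (continuous_poly_gauss P (1/2))
    (tendsto_poly_gauss_top P h2) (tendsto_poly_gauss_bot P h2)
  have hg : Integrable (fun x : ℝ => C * Real.exp (-(1/2 : ℝ) * x ^ 2)) :=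
    (integrable_exp_neg_mul_sq h2).const_mul C
  apply hg.mono' ((continuous_poly_gauss P 1).aestronglyMeasurable.congr ?_)
  · filter_upwards with x
    have : Real.exp (-x^2) = Real.exp (-(1/2 * x^2)) * Real.exp (-(1/2)*x^2) := by
      rw [← Real.exp_add]; ring_nf
    rw [Real.norm_eq_abs, this, ← mul_assoc, abs_mul, abs_of_pos (Real.exp_pos _)]
    apply mul_le_mul_of_nonneg_right _ (Real.exp_pos _).le
    exact hC x
  · filter_upwards with x; rw [one_mul]

theorem integrable_Hm_mul (a b : ℕ) :
    Integrable (fun x : ℝ => Hm a x * Hm b x * Real.exp (-x ^ 2)) := by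
  have h := integrable_poly_gauss (Rp a * Rp b)
  apply h.congr
  filter_upwards with x
  simp [Hm_eq_eval]

noncomputable def J (l : ℕ) : ℝ := ∫ x : ℝ, (Hm l x) ^ 2 * Real.exp (-x ^ 2)

theorem integrable_Hm_sq (l : ℕ) :
    Integrable (fun x : ℝ => (Hm l x) ^ 2 * Real.exp (-x ^ 2)) := by
  apply (integrable_Hm_mul l l).congr
  filter_upwards with x
  ring

theorem hasDerivAt_F (l : ℕ) (x : ℝ) :
    HasDerivAt (fun y : ℝ => (y * (Hm l y) ^ 2 / 2 - Hm l y * Hm (l + 1) y) * Real.exp (-y ^ 2))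
      (((Hm (l + 1) x) ^ 2 - ((l : ℝ) + 1 / 2) * (Hm l x) ^ 2) * Real.exp (-x ^ 2)) x := by
  have hu := hasDerivAt_Hm l x
  have hv := hasDerivAt_Hm_succ l x
  have he : HasDerivAt (fun y : ℝ => Real.exp (-y ^ 2)) (Real.exp (-x ^ 2) * (-(2 * x))) x := by
    have := ((hasDerivAt_pow 2 x).neg).exp
    simpa using this
  have hA : HasDerivAt (fun y : ℝ => y * (Hm l y) ^ 2 / 2 - Hm l y * Hm (l + 1) y)
      ((1 * (Hm l x) ^ 2 + x * (2 * Hm l x ^ (2 - 1) * (x * Hm l x - Hm (l + 1) x))) / 2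
        - ((x * Hm l x - Hm (l + 1) x) * Hm (l + 1) x
            + Hm l x * (((l : ℝ) + 1) * Hm l x))) x := by
    exact (((hasDerivAt_id x).mul (hu.pow 2)).div_const 2).sub (hu.mul hv)
  have := hA.mul he
  refine this.congr_deriv ?_
  ring

theorem J_succ (l : ℕ) : J (l + 1) = ((l : ℝ) + 1 / 2) * J l := by
  have hint : Integrable (fun x : ℝ =>
      ((Hm (l + 1) x) ^ 2 - ((l : ℝ) + 1 / 2) * (Hm l x) ^ 2) * Real.exp (-x ^ 2)) := by
    apply ((integrable_Hm_sq (l + 1)).sub ((integrable_Hm_sq l).const_mul (((l:ℝ) + 1/2)))).congr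
    filter_upwards with x; simp only [Pi.sub_apply]; ring
  have htop : Tendsto (fun y : ℝ =>
      (y * (Hm l y) ^ 2 / 2 - Hm l y * Hm (l + 1) y) * Real.exp (-y ^ 2)) atTop (nhds 0) := by
    have h := tendsto_poly_gauss_top (X * (Rp l) ^ 2 * C (1 / 2 : ℝ) - Rp l * Rp (l + 1))
      (one_pos)
    apply h.congr
    intro x
    simp only [eval_sub, eval_mul, eval_pow, eval_X, eval_C, one_mul, Hm_eq_eval]
    ring_nf
  have hbot : Tendsto (fun y : ℝ =>
      (y * (Hm l y) ^ 2 / 2 - Hm l y * Hm (l + 1) y) * Real.exp (-y ^ 2)) atBot (nhds 0) := by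
    have h := tendsto_poly_gauss_bot (X * (Rp l) ^ 2 * C (1 / 2 : ℝ) - Rp l * Rp (l + 1))
      (one_pos)
    apply h.congr
    intro x
    simp only [eval_sub, eval_mul, eval_pow, eval_X, eval_C, one_mul, Hm_eq_eval]
    ring_nf
  have key : ∫ x : ℝ, ((Hm (l + 1) x) ^ 2 - ((l : ℝ) + 1 / 2) * (Hm l x) ^ 2) * Real.exp (-x ^ 2)
      = 0 := by
    have := integral_of_hasDerivAt_of_tendsto (hasDerivAt_F l) hint hbot htop
    simpa using this
  have expand : ∫ x : ℝ, ((Hm (l + 1) x) ^ 2 - ((l : ℝ) + 1 / 2) * (Hm l x) ^ 2) * Real.exp (-x ^ 2)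
      = J (l + 1) - ((l : ℝ) + 1 / 2) * J l := by
    rw [show (fun x : ℝ => ((Hm (l + 1) x) ^ 2 - ((l : ℝ) + 1 / 2) * (Hm l x) ^ 2) * Real.exp (-x ^ 2))
        = fun x : ℝ => (Hm (l + 1) x) ^ 2 * Real.exp (-x ^ 2)
          - ((l : ℝ) + 1 / 2) * ((Hm l x) ^ 2 * Real.exp (-x ^ 2)) from funext fun x => by ring]
    rw [integral_sub (integrable_Hm_sq (l + 1)) ((integrable_Hm_sq l).const_mul (((l:ℝ) + 1/2))),
      integral_const_mul]
    rfl
  linarith [expand ▸ key]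

theorem J_zero : J 0 = Real.sqrt π := by
  have h0 : ∀ x : ℝ, Hm 0 x = 1 := fun x => by simp [Hm]
  have : J 0 = ∫ x : ℝ, Real.exp (-1 * x ^ 2) := by
    unfold J; congr 1; funext x; rw [h0]; ring_nf
  rw [this, integral_gaussian]
  norm_num

theorem J_nonneg (l : ℕ) : 0 ≤ J l :=
  integral_nonneg fun x => mul_nonneg (sq_nonneg _) (Real.exp_pos _).le

theorem J_le (l : ℕ) : J l * Real.sqrt ((l : ℝ) + 1) ≤ Real.sqrt π * (l.factorial : ℝ) := by
  induction l with
  | zero => simp [J_zero]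
  | succ l ih =>
    have key : ((l : ℝ) + 1 / 2) * Real.sqrt ((l : ℝ) + 2) ≤ ((l : ℝ) + 1) * Real.sqrt ((l : ℝ) + 1) := by
      have h1 : ((l : ℝ) + 1 / 2) * Real.sqrt ((l : ℝ) + 2)
          = Real.sqrt (((l : ℝ) + 1 / 2) ^ 2 * ((l : ℝ) + 2)) := by
        rw [Real.sqrt_mul (sq_nonneg _), Real.sqrt_sq (by positivity)]
      have h2 : ((l : ℝ) + 1) * Real.sqrt ((l : ℝ) + 1)
          = Real.sqrt (((l : ℝ) + 1) ^ 2 * ((l : ℝ) + 1)) := by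
        rw [Real.sqrt_mul (sq_nonneg _), Real.sqrt_sq (by positivity)]
      rw [h1, h2]
      apply Real.sqrt_le_sqrt
      nlinarith [Nat.cast_nonneg (α := ℝ) l]
    have hcast : ((l : ℝ) + 1) * (l.factorial : ℝ) = ((l + 1).factorial : ℝ) := by
      rw [Nat.factorial_succ]; push_cast; ring
    push_cast
    calc J (l + 1) * Real.sqrt ((l : ℝ) + 1 + 1)
        = J l * (((l : ℝ) + 1 / 2) * Real.sqrt ((l : ℝ) + 2)) := by rw [J_succ]; ring_nf
      _ ≤ J l * (((l : ℝ) + 1) * Real.sqrt ((l : ℝ) + 1)) :=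
          mul_le_mul_of_nonneg_left key (J_nonneg l)
      _ = ((l : ℝ) + 1) * (J l * Real.sqrt ((l : ℝ) + 1)) := by ring
      _ ≤ ((l : ℝ) + 1) * (Real.sqrt π * (l.factorial : ℝ)) :=
          mul_le_mul_of_nonneg_left ih (by positivity)
      _ = Real.sqrt π * (((l : ℝ) + 1) * (l.factorial : ℝ)) := by ring
      _ = Real.sqrt π * ((l + 1).factorial : ℝ) := by rw [hcast]

theorem Hm_sq_le (l : ℕ) (a : ℝ) :
    (Hm l a) ^ 2 * Real.exp (-a ^ 2) ≤ 2 * Real.sqrt π * (l.factorial : ℝ) := by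
  set ε : ℝ := Real.sqrt ((l : ℝ) + 1) with hε_def
  have hε : 0 < ε := Real.sqrt_pos.mpr (by positivity)
  have hε2 : ε ^ 2 = (l : ℝ) + 1 := Real.sq_sqrt (by positivity)
  -- Step 1 : FTC
  have hderiv : ∀ x ∈ Set.Ici a, HasDerivAt (fun y : ℝ => (Hm l y) ^ 2 * Real.exp (-y ^ 2))
      (-(2 * Hm l x * Hm (l + 1) x * Real.exp (-x ^ 2))) x := by
    intro x _
    have he : HasDerivAt (fun y : ℝ => Real.exp (-y ^ 2)) (Real.exp (-x ^ 2) * (-(2 * x))) x := by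
      simpa using ((hasDerivAt_pow 2 x).neg).exp
    have := ((hasDerivAt_Hm l x).pow 2).mul he
    refine this.congr_deriv ?_
    simp only [Pi.pow_apply]
    ring
  have hlhs : Integrable (fun x : ℝ => 2 * Hm l x * Hm (l + 1) x * Real.exp (-x ^ 2)) := by
    apply ((integrable_Hm_mul l (l + 1)).const_mul 2).congr
    filter_upwards with x; ring
  have hf'int : IntegrableOn (fun x : ℝ => -(2 * Hm l x * Hm (l + 1) x * Real.exp (-x ^ 2)))
      (Set.Ioi a) := hlhs.neg.integrableOn
  have htop : Tendsto (fun y : ℝ => (Hm l y) ^ 2 * Real.exp (-y ^ 2)) atTop (nhds 0) := by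
    have h := tendsto_poly_gauss_top ((Rp l) ^ 2) one_pos
    apply h.congr
    intro x
    simp [Hm_eq_eval]
  have hFTC := integral_Ioi_of_hasDerivAt_of_tendsto' hderiv hf'int htop
  have step1 : (Hm l a) ^ 2 * Real.exp (-a ^ 2)
      = ∫ x in Set.Ioi a, 2 * Hm l x * Hm (l + 1) x * Real.exp (-x ^ 2) := by
    rw [integral_neg] at hFTC
    linarith [hFTC]
  -- Step 2-3 : bound by full-line integral
  have hgint : Integrable (fun x : ℝ =>
      ε * ((Hm l x) ^ 2 * Real.exp (-x ^ 2)) + ε⁻¹ * ((Hm (l + 1) x) ^ 2 * Real.exp (-x ^ 2))) :=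
    ((integrable_Hm_sq l).const_mul ε).add ((integrable_Hm_sq (l + 1)).const_mul ε⁻¹)
  have step2 : (∫ x in Set.Ioi a, 2 * Hm l x * Hm (l + 1) x * Real.exp (-x ^ 2))
      ≤ ∫ x in Set.Ioi a,
        ε * ((Hm l x) ^ 2 * Real.exp (-x ^ 2)) + ε⁻¹ * ((Hm (l + 1) x) ^ 2 * Real.exp (-x ^ 2)) := by
    apply setIntegral_mono hlhs.integrableOn hgint.integrableOn
    intro x
    have hsq := sq_nonneg (ε * Hm l x - Hm (l + 1) x)
    have hinv : ε * ε⁻¹ = 1 := mul_inv_cancel₀ hε.ne'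
    have key : 2 * Hm l x * Hm (l + 1) x ≤ ε * (Hm l x) ^ 2 + ε⁻¹ * (Hm (l + 1) x) ^ 2 := by
      have h1 : ε * (2 * Hm l x * Hm (l + 1) x) ≤ ε * (ε * (Hm l x) ^ 2 + ε⁻¹ * (Hm (l + 1) x) ^ 2) := by
        nlinarith [hsq, hε.le]
      exact le_of_mul_le_mul_left h1 hε
    have hexp := (Real.exp_pos (-x ^ 2)).le
    calc 2 * Hm l x * Hm (l + 1) x * Real.exp (-x ^ 2)
        ≤ (ε * (Hm l x) ^ 2 + ε⁻¹ * (Hm (l + 1) x) ^ 2) * Real.exp (-x ^ 2) :=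
          mul_le_mul_of_nonneg_right key hexp
      _ = ε * ((Hm l x) ^ 2 * Real.exp (-x ^ 2)) + ε⁻¹ * ((Hm (l + 1) x) ^ 2 * Real.exp (-x ^ 2)) := by
          ring
  have step3 : (∫ x in Set.Ioi a,
        ε * ((Hm l x) ^ 2 * Real.exp (-x ^ 2)) + ε⁻¹ * ((Hm (l + 1) x) ^ 2 * Real.exp (-x ^ 2)))
      ≤ ε * J l + ε⁻¹ * J (l + 1) := by
    calc _ ≤ ∫ x : ℝ, ε * ((Hm l x) ^ 2 * Real.exp (-x ^ 2))
            + ε⁻¹ * ((Hm (l + 1) x) ^ 2 * Real.exp (-x ^ 2)) :=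
          setIntegral_le_integral hgint (by
            filter_upwards with x
            have := (Real.exp_pos (-x ^ 2)).le
            positivity)
      _ = ε * J l + ε⁻¹ * J (l + 1) := by
          rw [integral_add ((integrable_Hm_sq l).const_mul ε)
            ((integrable_Hm_sq (l + 1)).const_mul ε⁻¹), integral_const_mul, integral_const_mul]
          rfl
  -- Step 4 : numeric bounds
  have h4a : ε * J l ≤ Real.sqrt π * (l.factorial : ℝ) := by
    rw [hε_def, mul_comm]
    exact J_le l
  have h4b : ε⁻¹ * J (l + 1) ≤ Real.sqrt π * (l.factorial : ℝ) := by
    have hle : J (l + 1) ≤ Real.sqrt π * (l.factorial : ℝ) * ε := by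
      have h1 := J_le (l + 1)
      have hmono : Real.sqrt ((l : ℝ) + 1) ≤ Real.sqrt ((l : ℝ) + 1 + 1) :=
        Real.sqrt_le_sqrt (by linarith)
      have h2 : J (l + 1) * ε ≤ Real.sqrt π * ((l + 1).factorial : ℝ) := by
        calc J (l + 1) * ε ≤ J (l + 1) * Real.sqrt ((l : ℝ) + 1 + 1) :=
              mul_le_mul_of_nonneg_left hmono (J_nonneg (l + 1))
          _ ≤ Real.sqrt π * ((l + 1).factorial : ℝ) := by
              have := J_le (l + 1); push_cast at this ⊢; linarith
      have h3 : Real.sqrt π * ((l + 1).factorial : ℝ) = (Real.sqrt π * (l.factorial : ℝ) * ε) * ε := by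
        rw [Nat.factorial_succ]
        push_cast
        linear_combination (-(Real.sqrt π * (l.factorial : ℝ))) * hε2
      rw [h3] at h2
      exact le_of_mul_le_mul_right h2 hε
    calc ε⁻¹ * J (l + 1) ≤ ε⁻¹ * (Real.sqrt π * (l.factorial : ℝ) * ε) :=
          mul_le_mul_of_nonneg_left hle (by positivity)
      _ = Real.sqrt π * (l.factorial : ℝ) * (ε⁻¹ * ε) := by ring
      _ = Real.sqrt π * (l.factorial : ℝ) := by rw [inv_mul_cancel₀ hε.ne']; ring
  calc (Hm l a) ^ 2 * Real.exp (-a ^ 2) = _ := step1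
    _ ≤ _ := step2
    _ ≤ ε * J l + ε⁻¹ * J (l + 1) := step3
    _ ≤ 2 * Real.sqrt π * (l.factorial : ℝ) := by linarith

theorem hermite_bound (l : ℕ) (x : ℝ) :
    |Hm l x * Real.exp (-(x ^ 2) / 2)| ≤ 2 * Real.sqrt (l.factorial : ℝ) := by
  have hexp2 : Real.exp (-(x ^ 2) / 2) ^ 2 = Real.exp (-x ^ 2) := by
    rw [← Real.exp_nat_mul]
    congr 1
    push_cast
    ring
  have hsq : (Hm l x * Real.exp (-(x ^ 2) / 2)) ^ 2 = (Hm l x) ^ 2 * Real.exp (-x ^ 2) := by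
    rw [mul_pow, hexp2]
  have h1 : (Hm l x * Real.exp (-(x ^ 2) / 2)) ^ 2 ≤ 4 * (l.factorial : ℝ) := by
    rw [hsq]
    have h2 : Real.sqrt π ≤ 2 := by
      rw [show (2 : ℝ) = Real.sqrt 4 by
        rw [show (4 : ℝ) = 2 ^ 2 by norm_num, Real.sqrt_sq (by norm_num)]]
      exact Real.sqrt_le_sqrt (by linarith [Real.pi_le_four])
    have := Hm_sq_le l x
    nlinarith [(Nat.cast_pos (α := ℝ)).mpr l.factorial_pos]
  calc |Hm l x * Real.exp (-(x ^ 2) / 2)| = Real.sqrt ((Hm l x * Real.exp (-(x ^ 2) / 2)) ^ 2) :=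
        (Real.sqrt_sq_eq_abs _).symm
    _ ≤ Real.sqrt (4 * (l.factorial : ℝ)) := Real.sqrt_le_sqrt h1
    _ = 2 * Real.sqrt (l.factorial : ℝ) := by
        rw [Real.sqrt_mul (by norm_num), show (4 : ℝ) = 2 ^ 2 by norm_num,
          Real.sqrt_sq (by norm_num)]

/-- If `Σ |c_l| √(l!) < ∞`, then the series `Σ c_l H_l(x) e^{−x²/2}` converges
uniformly on `ℝ` to a bounded continuous function; in particular `Σ c_l H_l(x)`
converges for every `x` and defines a continuous function. -/
theorem hermite_series_uniform_convergence (c : ℕ → ℝ)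
    (hS : Summable (fun l => |c l| * Real.sqrt (l.factorial))) :
    TendstoUniformly
        (fun L x => ∑ l ∈ Finset.range L, c l * Hm l x * Real.exp (-(x^2)/2))
        (fun x => ∑' l, c l * Hm l x * Real.exp (-(x^2)/2)) atTop ∧
      Continuous (fun x : ℝ => ∑' l, c l * Hm l x * Real.exp (-(x^2)/2)) ∧
      (∃ M, ∀ x : ℝ, |∑' l, c l * Hm l x * Real.exp (-(x^2)/2)| ≤ M) ∧
      (∀ x : ℝ, Summable (fun l => c l * Hm l x)) ∧
      Continuous (fun x : ℝ => ∑' l, c l * Hm l x) := by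
  set u : ℕ → ℝ := fun l => 2 * (|c l| * Real.sqrt (l.factorial : ℝ)) with hu_def
  have hu : Summable u := hS.mul_left 2
  set f : ℕ → ℝ → ℝ := fun l x => c l * Hm l x * Real.exp (-(x ^ 2) / 2) with hf_def
  have hfu : ∀ l x, ‖f l x‖ ≤ u l := by
    intro l x
    rw [hf_def, Real.norm_eq_abs]
    calc |c l * Hm l x * Real.exp (-(x ^ 2) / 2)|
        = |c l| * |Hm l x * Real.exp (-(x ^ 2) / 2)| := by rw [mul_assoc, abs_mul]
      _ ≤ |c l| * (2 * Real.sqrt (l.factorial : ℝ)) :=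
          mul_le_mul_of_nonneg_left (hermite_bound l x) (abs_nonneg _)
      _ = u l := by rw [hu_def]; ring
  have hfc : ∀ l, Continuous (f l) := by
    intro l
    exact (continuous_const.mul (Hm_continuous l)).mul
      (Real.continuous_exp.comp (by continuity))
  have hone : ∀ x : ℝ, Real.exp (-(x ^ 2) / 2) * Real.exp (x ^ 2 / 2) = 1 := by
    intro x
    rw [← Real.exp_add]
    rw [show -(x ^ 2) / 2 + x ^ 2 / 2 = 0 by ring]
    exact Real.exp_zero
  have hnorm : ∀ x : ℝ, Summable (fun l => ‖f l x‖) := fun x =>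
    Summable.of_nonneg_of_le (fun _ => norm_nonneg _) (fun l => hfu l x) hu
  have hsum : ∀ x : ℝ, Summable (fun l => f l x) := fun x => (hnorm x).of_norm
  refine ⟨?_, ?_, ?_, ?_, ?_⟩
  · exact tendstoUniformly_tsum_nat hu hfu
  · exact continuous_tsum hfc hu hfu
  · refine ⟨∑' l, u l, fun x => ?_⟩
    calc |∑' l, f l x| = ‖∑' l, f l x‖ := (Real.norm_eq_abs _).symm
      _ ≤ ∑' l, ‖f l x‖ := norm_tsum_le_tsum_norm (hnorm x)
      _ ≤ ∑' l, u l := Summable.tsum_le_tsum (fun l => hfu l x) (hnorm x) hu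
  · intro x
    have h := (hsum x).mul_right (Real.exp (x ^ 2 / 2))
    apply h.congr
    intro l
    rw [hf_def, mul_assoc (c l * Hm l x), hone, mul_one]
  · have heq : (fun x : ℝ => ∑' l, c l * Hm l x)
        = fun x : ℝ => (∑' l, f l x) * Real.exp (x ^ 2 / 2) := by
      funext x
      rw [← tsum_mul_right]
      exact tsum_congr fun l => by rw [hf_def, mul_assoc (c l * Hm l x), hone, mul_one]
    rw [heq]
    exact (continuous_tsum hfc hu hfu).mul (Real.continuous_exp.comp (by continuity))
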